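/- Let (W, S) be a Coxeter system of type D_n realized as even signed permutations inside W_{B_n}, with canonical lifts x ↦ x^B to the Artin group A_{B_n} and x ↦ x^D to the Artin group A_{D_n}. Let π₁: A_{B_n} → Ã_{B_n} be the quotient by the normal closure of σ_0^2, and identify A_{D_n} with the subgroup of Ã_{B_n} generated by π₁(σ_0 σ_1 σ_0), π₁(σ_1), ..., π₁(σ_{n−1}). Then for every x ∈ W_{D_n}, π₁(x^B) = x^D; that is, the canonical positive B_n-lift of an element of W_{D_n}, pushed to the quotient Ã_{B_n}, coincides with its canonical positive D_n-lift. -/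

import Mathlib

/-- The group of signed permutations: permutations `w` of `ℤ` with `w (-i) = - w i`
which move only `{-n, …, -1, 1, …, n}`. -/
def signedPermGroup (n : ℕ) : Subgroup (Equiv.Perm ℤ) where
  carrier := {w | (∀ i : ℤ, w (-i) = -(w i)) ∧ ∀ i : ℤ, (n : ℤ) < |i| → w i = i}
  one_mem' := by constructor <;> intro i <;> simp
  mul_mem' := by
    rintro a b ⟨ha1, ha2⟩ ⟨hb1, hb2⟩
    refine ⟨fun i => ?_, fun i hi => ?_⟩
    · simp [Equiv.Perm.mul_apply, hb1, ha1]
    · have h1 : b i = i := hb2 i hi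
      simp [Equiv.Perm.mul_apply, h1, ha2 i hi]
  inv_mem' := by
    rintro a ⟨ha1, ha2⟩
    refine ⟨fun i => ?_, fun i hi => ?_⟩
    · apply a.injective
      rw [Equiv.Perm.coe_inv, Equiv.apply_symm_apply, ha1, Equiv.apply_symm_apply]
    · apply a.injective
      rw [Equiv.Perm.coe_inv, Equiv.apply_symm_apply, ha2 i hi]

/-- The standard Coxeter generators of type `Bₙ` as signed permutations:
`s 0 = (-1, 1)` and `s i = (i, i+1)(-i, -i-1)`. -/
def sgen : ℕ → Equiv.Perm ℤ := fun i =>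
  if i = 0 then Equiv.swap (-1 : ℤ) 1
  else Equiv.swap (i : ℤ) ((i : ℤ) + 1) * Equiv.swap (-(i : ℤ)) (-((i : ℤ) + 1))

/-- The standard Coxeter generators of type `Dₙ`:  `t 0 = s 0 * s 1 * s 0`, `t i = s i`. -/
def tgen : ℕ → Equiv.Perm ℤ := fun i =>
  if i = 0 then sgen 0 * sgen 1 * sgen 0 else sgen i

/-- Word length of `g` with respect to a generating set `S` (the Coxeter length function
when `S` is the simple system of a Coxeter group). -/
noncomputable def wordLength {G : Type*} [Group G] (S : Set G) (g : G) : ℕ :=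
  sInf {k | ∃ l : List G, (∀ x ∈ l, x ∈ S) ∧ l.length = k ∧ l.prod = g}

/-- Number of `i ∈ {1, …, n}` with `w i < 0`. -/
noncomputable def negCount (n : ℕ) (w : Equiv.Perm ℤ) : ℕ :=
  ((Finset.Icc (1 : ℤ) (n : ℤ)).filter (fun i => w i < 0)).card

/-- The alternating braid word `aba⋯` (`m` letters) in the free group. -/
def braidWord {α : Type*} (m : ℕ) (a b : α) : FreeGroup α :=
  ((List.range m).map (fun k => FreeGroup.of (if k % 2 = 0 then a else b))).prod

/-- The Artin (braid) relations associated to a Coxeter-type matrix `m`. -/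
def artinRels {n : ℕ} (m : Fin n → Fin n → ℕ) : Set (FreeGroup (Fin n)) :=
  {r | ∃ i j : Fin n, i ≠ j ∧ r = braidWord (m i j) i j * (braidWord (m j i) j i)⁻¹}

/-- The Artin group of a Coxeter-type matrix `m`: generators `Fin n`, braid relations only. -/
abbrev ArtinGroup {n : ℕ} (m : Fin n → Fin n → ℕ) : Type := PresentedGroup (artinRels m)

/-- The Coxeter matrix of type `Bₙ` (the bond between generators `0` and `1` is `4`). -/
def mB (n : ℕ) : Fin n → Fin n → ℕ := fun i j =>
  if i = j then 1
  else if (i.val = 0 ∧ j.val = 1) ∨ (i.val = 1 ∧ j.val = 0) then 4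
  else if i.val + 1 = j.val ∨ j.val + 1 = i.val then 3 else 2

/-- The Coxeter matrix of type `Dₙ` (generator `0` is joined to generator `2`,
and `1, 2, …, n-1` form a chain). -/
def mD (n : ℕ) : Fin n → Fin n → ℕ := fun i j =>
  if i = j then 1
  else if (i.val = 0 ∧ j.val = 2) ∨ (i.val = 2 ∧ j.val = 0) then 3
  else if (i.val = 0 ∧ j.val = 1) ∨ (i.val = 1 ∧ j.val = 0) then 2
  else if i.val + 1 = j.val ∨ j.val + 1 = i.val then 3 else 2

/-- The Coxeter matrix of type `Aₙ` (a chain). -/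
def mA (n : ℕ) : Fin n → Fin n → ℕ := fun i j =>
  if i = j then 1
  else if i.val + 1 = j.val ∨ j.val + 1 = i.val then 3 else 2

/-- The normal closure of `{σ₀²}` in the Artin group of type `Bₙ`. -/
def sigma0sqClosure (n : ℕ) : Subgroup (ArtinGroup (mB n)) :=
  Subgroup.normalClosure {g | ∃ i : Fin n, i.val = 0 ∧ g = (PresentedGroup.of i) ^ 2}

instance (n : ℕ) : (sigma0sqClosure n).Normal := Subgroup.normalClosure_normal

/-- The quotient `Ã_{Bₙ} = A_{Bₙ}/⟨⟨σ₀²⟩⟩`. -/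
abbrev AtilB (n : ℕ) := ArtinGroup (mB n) ⧸ sigma0sqClosure n

/-- The quotient map `π₁ : A_{Bₙ} → Ã_{Bₙ}`. -/
def piOne (n : ℕ) : ArtinGroup (mB n) →* AtilB n := QuotientGroup.mk' (sigma0sqClosure n)

/-!
On signed permutations, the Coxeter lengths of types `Bₙ` and `Dₙ` are inversion counts on the
respective positive roots, encoded as pairs of integers: right multiplication by a simple
reflection changes such a count by exactly one, which bounds the word length from below, and
descending along inversions attains the bound.

An element `x ≠ 1` of `W_{Dₙ}` either has a descent `sₖ` with `k ≥ 1`, which is a descent of both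
types, or is increasing on `1, …, n`; in the latter case, as `x` has an even number of negative
entries, `x 1` and `x 2` are both negative, so `t₀` is a type-`D` descent and `s₀, s₁, s₀` are
three successive type-`B` descents. Descending in this way yields a reduced `D`-word for `x` whose
substitution `t₀ ↦ s₀ s₁ s₀` is a reduced `B`-word. Lifting both words, `ι` sends the lift of the
`D`-word to `π₁` of the lift of the `B`-word, letter by letter.
-/

open Equiv Finset

section Generators

lemma sgen_zero_apply (x : ℤ) : sgen 0 x = if x = -1 then 1 else if x = 1 then -1 else x := by
  simp [sgen, swap_apply_def]

lemma sgen_apply {k : ℕ} (hk : k ≠ 0) (x : ℤ) :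
    sgen k x = if x = k then (k : ℤ) + 1 else if x = (k : ℤ) + 1 then k
      else if x = -(k : ℤ) then -((k : ℤ) + 1)
      else if x = -((k : ℤ) + 1) then -(k : ℤ) else x := by
  have : (0 : ℤ) < k := by omega
  simp only [sgen, if_neg hk, Perm.mul_apply, swap_apply_def]
  split_ifs <;> omega

lemma tgen_of_ne_zero {k : ℕ} (hk : k ≠ 0) : tgen k = sgen k := if_neg hk

lemma sgen_neg (k : ℕ) (x : ℤ) : sgen k (-x) = -sgen k x := by
  rcases eq_or_ne k 0 with rfl | hk
  · simp only [sgen_zero_apply]; split_ifs <;> first | contradiction | omega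
  · simp only [sgen_apply hk]; split_ifs <;> omega

lemma sgen_sgen (k : ℕ) (x : ℤ) : sgen k (sgen k x) = x := by
  rcases eq_or_ne k 0 with rfl | hk
  · simp only [sgen_zero_apply]; split_ifs <;> first | contradiction | omega
  · simp only [sgen_apply hk]; split_ifs <;> omega

lemma tgen_zero_apply (x : ℤ) :
    tgen 0 x = if x = 1 then -2 else if x = 2 then -1 else if x = -1 then 2
      else if x = -2 then 1 else x := by
  simp only [tgen, if_pos, Perm.mul_apply, sgen_zero_apply, sgen_apply one_ne_zero]
  split_ifs <;> first | contradiction | omega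

lemma tgen_neg (k : ℕ) (x : ℤ) : tgen k (-x) = -tgen k x := by
  rcases eq_or_ne k 0 with rfl | hk
  · simp only [tgen_zero_apply]; split_ifs <;> omega
  · rw [tgen_of_ne_zero hk, sgen_neg]

lemma tgen_tgen (k : ℕ) (x : ℤ) : tgen k (tgen k x) = x := by
  rcases eq_or_ne k 0 with rfl | hk
  · simp only [tgen_zero_apply]; split_ifs <;> first | contradiction | omega
  · simp only [tgen_of_ne_zero hk, sgen_sgen]

lemma tgen_mul_self (k : ℕ) : tgen k * tgen k = 1 :=
  Perm.ext (tgen_tgen k)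

lemma sgen_mem_signedPermGroup {n k : ℕ} (hk : k < n) : sgen k ∈ signedPermGroup n := by
  refine ⟨sgen_neg k, fun x hx => ?_⟩
  rw [lt_abs] at hx
  rcases eq_or_ne k 0 with rfl | hk0
  · simp only [sgen_zero_apply]; split_ifs <;> first | contradiction | omega
  · simp only [sgen_apply hk0]; split_ifs <;> omega

lemma tgen_mem_signedPermGroup {n k : ℕ} (hn : 2 ≤ n) (hk : k < n) :
    tgen k ∈ signedPermGroup n := by
  rcases eq_or_ne k 0 with rfl | hk0
  · have h : ∀ i < 2, sgen i ∈ signedPermGroup n :=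
      fun i hi => sgen_mem_signedPermGroup (by omega)
    exact mul_mem (mul_mem (h 0 (by omega)) (h 1 (by omega))) (h 0 (by omega))
  · rw [tgen_of_ne_zero hk0]
    exact sgen_mem_signedPermGroup hk

lemma closure_tgen_le_signedPermGroup {n : ℕ} (hn : 2 ≤ n) :
    Subgroup.closure (tgen '' {i | i < n}) ≤ signedPermGroup n := by
  rw [Subgroup.closure_le]
  rintro _ ⟨k, hk, rfl⟩
  exact tgen_mem_signedPermGroup hn hk

end Generators

section SignedPerm

variable {n : ℕ} {w : Perm ℤ}

lemma apply_zero_of_mem_signedPermGroup (hw : w ∈ signedPermGroup n) : w 0 = 0 := by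
  have := hw.1 0
  simp only [neg_zero] at this
  omega

lemma apply_ne_zero_of_mem_signedPermGroup (hw : w ∈ signedPermGroup n) {x : ℤ} (hx : x ≠ 0) :
    w x ≠ 0 := by
  rw [← apply_zero_of_mem_signedPermGroup hw]
  exact w.injective.ne hx

lemma abs_apply_le_of_mem_signedPermGroup (hw : w ∈ signedPermGroup n) {x : ℤ}
    (hx : |x| ≤ n) : |w x| ≤ n := by
  by_contra h
  have := w.injective (hw.2 (w x) (not_le.mp h))
  rw [this] at h
  exact h hx

lemma eq_one_of_forall_mem_Icc (hw : w ∈ signedPermGroup n)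
    (h : ∀ i ∈ Icc (1 : ℤ) n, w i = i) : w = 1 := by
  ext x
  rw [Perm.one_apply]
  rcases lt_trichotomy x 0 with hx | rfl | hx
  · by_cases hxn : -(n : ℤ) ≤ x
    · have := hw.1 (-x)
      rw [neg_neg, h (-x) (mem_Icc.mpr ⟨by omega, by omega⟩)] at this
      omega
    · exact hw.2 x (by rw [lt_abs]; omega)
  · exact apply_zero_of_mem_signedPermGroup hw
  · by_cases hxn : x ≤ n
    · exact h x (mem_Icc.mpr ⟨hx, hxn⟩)
    · exact hw.2 x (by rw [lt_abs]; omega)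

lemma eq_one_of_strictMonoOn (hw : w ∈ signedPermGroup n) (hmono : StrictMonoOn w (Set.Icc 1 n))
    (h1 : 0 < w 1) : w = 1 := by
  have hdiff : MonotoneOn (fun i => w i - i) (Set.Icc 1 n) := by
    refine monotoneOn_of_le_add_one Set.ordConnected_Icc fun a _ ha ha1 => ?_
    have := hmono ha ha1 (lt_add_one a)
    omega
  refine eq_one_of_forall_mem_Icc hw fun i hi => ?_
  rw [mem_Icc] at hi
  have h1i := hdiff (Set.mem_Icc.mpr ⟨le_rfl, by omega⟩) (Set.mem_Icc.mpr hi) hi.1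
  have hin := hdiff (Set.mem_Icc.mpr hi) (Set.mem_Icc.mpr ⟨by omega, le_rfl⟩) hi.2
  have hwn := abs_apply_le_of_mem_signedPermGroup hw (x := n) (by simp)
  simp only at h1i hin
  rw [abs_le] at hwn
  omega

end SignedPerm

section InversionCount

/-- A pair `(a, b)` with `a < b` encodes the root `e_b - e_a`, where `e_{-i} = -e_i`, so
`(a, b)` and `(-b, -a)` encode the same root; `canonRoot` picks the representative with
`0 ≤ a + b`. In this encoding `rootsB n` and `rootsD n` below are the positive roots of types `Bₙ`
(up to scaling) and `Dₙ`, and `w` makes the root negative iff `w b < w a`. -/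
def canonRoot (p : ℤ × ℤ) : ℤ × ℤ :=
  if 0 < p.1 + p.2 ∨ (p.1 + p.2 = 0 ∧ p.1 < p.2) then p else (-p.2, -p.1)

def invCount (R : Finset (ℤ × ℤ)) (w : Perm ℤ) : ℕ := #{p ∈ R | w p.2 < w p.1}

structure IsSimpleReflection (R : Finset (ℤ × ℤ)) (t : Perm ℤ) (p₀ : ℤ × ℤ) :
    Prop where
  mem : p₀ ∈ R
  apply_neg : ∀ x, t (-x) = -t x
  apply_apply : ∀ x, t (t x) = x
  apply_fst : t p₀.1 = p₀.2
  mapsTo : ∀ p ∈ R, p ≠ p₀ → canonRoot (t p.1, t p.2) ∈ R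

variable {R : Finset (ℤ × ℤ)} {t w : Perm ℤ} {p₀ : ℤ × ℤ}

namespace IsSimpleReflection

variable (ht : IsSimpleReflection R t p₀) (hR : ∀ p ∈ R, p.1 < p.2 ∧ 0 ≤ p.1 + p.2)
include ht hR

lemma canonRoot_canonRoot {p : ℤ × ℤ} (hp : p ∈ R) :
    canonRoot (t (canonRoot (t p.1, t p.2)).1, t (canonRoot (t p.1, t p.2)).2) = p := by
  obtain ⟨a, b⟩ := p
  obtain ⟨hab, hsum⟩ := hR _ hp
  unfold canonRoot
  split_ifs with h₁ h₂ h₂ <;>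
    simp only [ht.apply_neg, ht.apply_apply, neg_neg, Prod.mk.injEq] at h₁ h₂ ⊢ <;> omega

lemma canonRoot_ne {p : ℤ × ℤ} (hp : p ∈ R) : canonRoot (t p.1, t p.2) ≠ p₀ := by
  -- otherwise `p` is the image of `p₀`, which is the negative root `-p₀`
  intro h
  obtain ⟨hab, -⟩ := hR _ hp
  obtain ⟨h₀, hsum₀⟩ := hR _ ht.mem
  have hsnd : t p₀.2 = p₀.1 := by rw [← ht.apply_fst, ht.apply_apply]
  have := ht.canonRoot_canonRoot hR hp
  rw [h, ht.apply_fst, hsnd, canonRoot] at this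
  split_ifs at this <;> rw [← this] at hab <;> simp only at hab <;> omega

lemma invCount_mul_add_ite (hw : ∀ x, w (-x) = -w x) :
    invCount R (w * t) + (if w p₀.2 < w p₀.1 then 1 else 0)
      = invCount R w + (if w p₀.1 < w p₀.2 then 1 else 0) := by
  have hsnd : t p₀.2 = p₀.1 := by rw [← ht.apply_fst, ht.apply_apply]
  have hrest : ∑ p ∈ R.erase p₀, (if (w * t) p.2 < (w * t) p.1 then 1 else 0)
      = ∑ p ∈ R.erase p₀, (if w p.2 < w p.1 then 1 else 0) := by
    refine sum_nbij' (fun p => canonRoot (t p.1, t p.2)) (fun p => canonRoot (t p.1, t p.2))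
      ?_ ?_ ?_ ?_ ?_
    all_goals intro p hp; obtain ⟨hne, hp⟩ := mem_erase.mp hp
    · exact mem_erase.mpr ⟨ht.canonRoot_ne hR hp, ht.mapsTo p hp hne⟩
    · exact mem_erase.mpr ⟨ht.canonRoot_ne hR hp, ht.mapsTo p hp hne⟩
    · exact ht.canonRoot_canonRoot hR hp
    · exact ht.canonRoot_canonRoot hR hp
    · unfold canonRoot
      by_cases hc : 0 < t p.1 + t p.2 ∨ (t p.1 + t p.2 = 0 ∧ t p.1 < t p.2)
      · rw [if_pos hc]; rfl
      · rw [if_neg hc]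
        simp only [Perm.mul_apply, hw, neg_lt_neg_iff]
        congr
  simp only [invCount, card_filter]
  rw [← add_sum_erase _ _ ht.mem, ← add_sum_erase _ _ ht.mem, hrest, Perm.mul_apply,
    Perm.mul_apply, ht.apply_fst, hsnd]
  split_ifs <;> omega

lemma invCount_mul_le (hw : ∀ x, w (-x) = -w x) : invCount R (w * t) ≤ invCount R w + 1 := by
  have := ht.invCount_mul_add_ite hR hw
  split_ifs at this <;> omega

lemma invCount_mul_add_one (hw : ∀ x, w (-x) = -w x) (hlt : w p₀.2 < w p₀.1) :
    invCount R (w * t) + 1 = invCount R w := by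
  have := ht.invCount_mul_add_ite hR hw
  rwa [if_pos hlt, if_neg (by omega), add_zero] at this

end IsSimpleReflection

lemma invCount_one (hR : ∀ p ∈ R, p.1 < p.2 ∧ 0 ≤ p.1 + p.2) : invCount R 1 = 0 := by
  rw [invCount, card_eq_zero, filter_eq_empty_iff]
  intro p hp
  simpa using (hR p hp).1.le

end InversionCount

section Roots

noncomputable def rootsB (n : ℕ) : Finset (ℤ × ℤ) :=
  {p ∈ Icc (-(n : ℤ)) n ×ˢ Icc 1 (n : ℤ) | p.1 ≠ 0 ∧ p.1 < p.2 ∧ 0 ≤ p.1 + p.2}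

noncomputable def rootsD (n : ℕ) : Finset (ℤ × ℤ) :=
  {p ∈ Icc (-(n : ℤ)) n ×ˢ Icc 1 (n : ℤ) | p.1 ≠ 0 ∧ p.1 < p.2 ∧ 0 < p.1 + p.2}

def simpleRootB (k : ℕ) : ℤ × ℤ := if k = 0 then (-1, 1) else (k, k + 1)

def simpleRootD (k : ℕ) : ℤ × ℤ := if k = 0 then (-1, 2) else (k, k + 1)

variable {n : ℕ}

lemma mem_rootsB {a b : ℤ} :
    (a, b) ∈ rootsB n ↔ a ≠ 0 ∧ a < b ∧ 0 ≤ a + b ∧ b ≤ n := by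
  simp only [rootsB, mem_filter, mem_product, mem_Icc]
  omega

lemma mem_rootsD {a b : ℤ} :
    (a, b) ∈ rootsD n ↔ a ≠ 0 ∧ a < b ∧ 0 < a + b ∧ b ≤ n := by
  simp only [rootsD, mem_filter, mem_product, mem_Icc]
  omega

lemma rootsB_pos : ∀ p ∈ rootsB n, p.1 < p.2 ∧ 0 ≤ p.1 + p.2 := by
  rintro ⟨a, b⟩ hp
  rw [mem_rootsB] at hp
  omega

lemma rootsD_pos : ∀ p ∈ rootsD n, p.1 < p.2 ∧ 0 ≤ p.1 + p.2 := by
  rintro ⟨a, b⟩ hp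
  rw [mem_rootsD] at hp
  omega

lemma isSimpleReflection_sgen {k : ℕ} (hk : k < n) :
    IsSimpleReflection (rootsB n) (sgen k) (simpleRootB k) := by
  refine ⟨?_, sgen_neg k, sgen_sgen k, ?_, ?_⟩
  all_goals rcases eq_or_ne k 0 with rfl | hk0
  · rw [simpleRootB, if_pos rfl, mem_rootsB]; omega
  · rw [simpleRootB, if_neg hk0, mem_rootsB]; omega
  · simp [simpleRootB, sgen_zero_apply]
  · simp [simpleRootB, hk0, sgen_apply hk0]
  · rintro ⟨a, b⟩ hp hne
    rw [mem_rootsB] at hp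
    simp only [simpleRootB, if_pos, ne_eq, Prod.mk.injEq] at hne
    simp only [canonRoot, sgen_zero_apply]
    split_ifs <;> rw [mem_rootsB] <;> omega
  · rintro ⟨a, b⟩ hp hne
    rw [mem_rootsB] at hp
    simp only [simpleRootB, if_neg hk0, ne_eq, Prod.mk.injEq] at hne
    simp only [canonRoot, sgen_apply hk0]
    split_ifs <;> rw [mem_rootsB] <;> omega

lemma isSimpleReflection_tgen (hn : 2 ≤ n) {k : ℕ} (hk : k < n) :
    IsSimpleReflection (rootsD n) (tgen k) (simpleRootD k) := by
  refine ⟨?_, tgen_neg k, tgen_tgen k, ?_, ?_⟩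
  all_goals rcases eq_or_ne k 0 with rfl | hk0
  · rw [simpleRootD, if_pos rfl, mem_rootsD]; omega
  · rw [simpleRootD, if_neg hk0, mem_rootsD]; omega
  · simp [simpleRootD, tgen_zero_apply]
  · simp [simpleRootD, hk0, tgen_of_ne_zero hk0, sgen_apply hk0]
  · rintro ⟨a, b⟩ hp hne
    rw [mem_rootsD] at hp
    simp only [simpleRootD, if_pos, ne_eq, Prod.mk.injEq] at hne
    simp only [canonRoot, tgen_zero_apply]
    split_ifs <;> rw [mem_rootsD] <;> omega
  · rintro ⟨a, b⟩ hp hne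
    rw [mem_rootsD] at hp
    simp only [simpleRootD, if_neg hk0, ne_eq, Prod.mk.injEq] at hne
    simp only [canonRoot, tgen_of_ne_zero hk0, sgen_apply hk0]
    split_ifs <;> rw [mem_rootsD] <;> omega

end Roots

section WordLength

variable {G : Type*} [Group G] {S : Set G} {H : Subgroup G} {N : G → ℕ}

lemma apply_list_prod_le_length (hSH : S ⊆ H) (hN1 : N 1 = 0)
    (hN : ∀ w ∈ H, ∀ s ∈ S, N (w * s) ≤ N w + 1) {l : List G}
    (hl : ∀ s ∈ l, s ∈ S) : N l.prod ≤ l.length := by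
  induction l using List.reverseRecOn with
  | nil => simp [hN1]
  | append_singleton l s ih =>
    have hl' : ∀ s ∈ l, s ∈ S := fun s hs => hl s (List.mem_append_left _ hs)
    have hprod : l.prod ∈ H := H.list_prod_mem fun s hs => hSH (hl' s hs)
    rw [List.prod_append, List.prod_singleton, List.length_append, List.length_singleton]
    exact (hN _ hprod s (hl s (by simp))).trans (by have := ih hl'; omega)

lemma wordLength_list_prod (hSH : S ⊆ H) (hN1 : N 1 = 0)
    (hN : ∀ w ∈ H, ∀ s ∈ S, N (w * s) ≤ N w + 1) {l : List G} (hl : ∀ s ∈ l, s ∈ S)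
    (hlen : l.length = N l.prod) : wordLength S l.prod = l.length := by
  refine le_antisymm (Nat.sInf_le ⟨l, hl, rfl, rfl⟩) (le_csInf ⟨_, l, hl, rfl, rfl⟩ ?_)
  rintro k ⟨l', hl', rfl, hprod⟩
  rw [hlen, ← hprod]
  exact apply_list_prod_le_length hSH hN1 hN hl'

end WordLength

section Lengths

variable {n : ℕ}

lemma wordLength_sgen (l : List (Fin n))
    (hlen : l.length = invCount (rootsB n) (l.map fun i => sgen i.val).prod) :
    wordLength (sgen '' {i | i < n}) (l.map fun i => sgen i.val).prod = l.length := by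
  rw [← List.length_map (f := fun i : Fin n => sgen i.val)] at hlen ⊢
  refine wordLength_list_prod (H := signedPermGroup n) ?_ (invCount_one rootsB_pos) ?_ ?_ hlen
  · rintro _ ⟨k, hk, rfl⟩
    exact sgen_mem_signedPermGroup hk
  · rintro w hw _ ⟨k, hk, rfl⟩
    exact (isSimpleReflection_sgen hk).invCount_mul_le rootsB_pos hw.1
  · simp only [List.mem_map]
    rintro _ ⟨i, -, rfl⟩
    exact ⟨i.val, i.isLt, rfl⟩

lemma wordLength_tgen (hn : 2 ≤ n) (l : List (Fin n))
    (hlen : l.length = invCount (rootsD n) (l.map fun i => tgen i.val).prod) :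
    wordLength (tgen '' {i | i < n}) (l.map fun i => tgen i.val).prod = l.length := by
  rw [← List.length_map (f := fun i : Fin n => tgen i.val)] at hlen ⊢
  refine wordLength_list_prod (H := signedPermGroup n) ?_ (invCount_one rootsD_pos) ?_ ?_ hlen
  · rintro _ ⟨k, hk, rfl⟩
    exact tgen_mem_signedPermGroup hn hk
  · rintro w hw _ ⟨k, hk, rfl⟩
    exact (isSimpleReflection_tgen hn hk).invCount_mul_le rootsD_pos hw.1
  · simp only [List.mem_map]
    rintro _ ⟨i, -, rfl⟩
    exact ⟨i.val, i.isLt, rfl⟩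

end Lengths

section NegCount

variable {n : ℕ} {w : Perm ℤ}

lemma negCount_mul_sgen {k : ℕ} (hk : k ≠ 0) (hkn : k < n) :
    negCount n (w * sgen k) = negCount n w := by
  have hmaps : ∀ i ∈ Icc (1 : ℤ) n, sgen k i ∈ Icc (1 : ℤ) n := by
    intro i hi
    rw [mem_Icc] at hi ⊢
    rw [sgen_apply hk]
    split_ifs <;> omega
  refine card_nbij' (sgen k) (sgen k) ?_ ?_ (fun i _ => sgen_sgen k i) (fun i _ => sgen_sgen k i)
  all_goals intro i hi; rw [mem_coe, mem_filter] at hi ⊢; rw [Perm.mul_apply] at *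
  · exact ⟨hmaps i hi.1, hi.2⟩
  · exact ⟨hmaps i hi.1, by rw [sgen_sgen]; exact hi.2⟩

lemma even_negCount_mul_sgen_zero (hn : 1 ≤ n) (hw : w ∈ signedPermGroup n) :
    Even (negCount n (w * sgen 0)) ↔ ¬Even (negCount n w) := by
  have h1 : (1 : ℤ) ∈ Icc (1 : ℤ) n := mem_Icc.mpr ⟨le_rfl, by omega⟩
  have hrest : ∀ i ∈ (Icc (1 : ℤ) n).erase 1, (w * sgen 0) i = w i := by
    intro i hi
    rw [mem_erase, mem_Icc] at hi
    rw [Perm.mul_apply, sgen_zero_apply, if_neg (by omega), if_neg hi.1]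
  have hw1 : (w * sgen 0) 1 = -w 1 := by rw [Perm.mul_apply, ← hw.1]; simp [sgen_zero_apply]
  have hw1' : w 1 ≠ 0 := apply_ne_zero_of_mem_signedPermGroup hw one_ne_zero
  simp only [negCount, card_filter]
  rw [← add_sum_erase _ _ h1, ← add_sum_erase _ _ h1,
    sum_congr rfl fun i hi => by rw [hrest i hi], hw1]
  split_ifs <;> first | omega | simp [parity_simps]

lemma even_negCount_mul_tgen (hn : 2 ≤ n) (hw : w ∈ signedPermGroup n) {k : ℕ} (hk : k < n) :
    Even (negCount n (w * tgen k)) ↔ Even (negCount n w) := by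
  rcases eq_or_ne k 0 with rfl | hk0
  · have hs : ∀ i < 2, sgen i ∈ signedPermGroup n :=
      fun i hi => sgen_mem_signedPermGroup (by omega)
    have hw₀ := mul_mem hw (hs 0 (by omega))
    have hw₁ := mul_mem hw₀ (hs 1 (by omega))
    rw [tgen, if_pos rfl, ← mul_assoc, ← mul_assoc,
      even_negCount_mul_sgen_zero (by omega) hw₁, negCount_mul_sgen one_ne_zero (by omega),
      even_negCount_mul_sgen_zero (by omega) hw, not_not]
  · rw [tgen_of_ne_zero hk0, negCount_mul_sgen hk0 hk]

lemma even_negCount_of_mem_closure (hn : 2 ≤ n) {x : Perm ℤ}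
    (hx : x ∈ Subgroup.closure (tgen '' {i | i < n})) : Even (negCount n x) := by
  induction hx using Subgroup.closure_induction_right with
  | one =>
    rw [negCount, filter_false_of_mem fun i hi => by rw [mem_Icc] at hi; rw [Perm.one_apply]; omega,
      card_empty]
    exact ⟨0, rfl⟩
  | mul_right x hx _ hy ih =>
    obtain ⟨k, hk, rfl⟩ := hy
    rwa [even_negCount_mul_tgen hn (closure_tgen_le_signedPermGroup hn hx) hk]
  | mul_inv_cancel x hx _ hy ih =>
    obtain ⟨k, hk, rfl⟩ := hy
    rwa [inv_eq_of_mul_eq_one_right (tgen_mul_self k),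
      even_negCount_mul_tgen hn (closure_tgen_le_signedPermGroup hn hx) hk]

lemma negCount_eq_one_of_strictMonoOn (hn : 2 ≤ n) (hmono : StrictMonoOn w (Set.Icc 1 n))
    (h1 : w 1 < 0) (h2 : 0 < w 2) : negCount n w = 1 := by
  rw [negCount, card_eq_one]
  refine ⟨1, ext fun i => ?_⟩
  simp only [mem_filter, mem_Icc, mem_singleton]
  refine ⟨fun ⟨hi, hwi⟩ => ?_, fun hi => ?_⟩
  · by_contra hi1
    have := hmono.monotoneOn (a := 2) (b := i) (by simp; omega) (by simp; omega) (by omega)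
    omega
  · subst hi
    exact ⟨⟨le_rfl, by omega⟩, h1⟩

lemma apply_one_neg_and_apply_two_neg (hn : 2 ≤ n) (hw : w ∈ signedPermGroup n)
    (heven : Even (negCount n w)) (hw1 : w ≠ 1) (hmono : StrictMonoOn w (Set.Icc 1 n)) :
    w 1 < 0 ∧ w 2 < 0 := by
  have h1 : w 1 < 0 := by
    by_contra h
    exact hw1 (eq_one_of_strictMonoOn hw hmono
      (lt_of_le_of_ne (not_lt.mp h) (apply_ne_zero_of_mem_signedPermGroup hw one_ne_zero).symm))
  refine ⟨h1, ?_⟩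
  by_contra h
  have h2 := lt_of_le_of_ne (not_lt.mp h) (apply_ne_zero_of_mem_signedPermGroup hw two_ne_zero).symm
  rw [negCount_eq_one_of_strictMonoOn hn hmono h1 h2] at heven
  exact Nat.not_even_one heven

end NegCount

lemma List.prod_map_flatMap {α β M : Type*} [Monoid M] (l : List α) (f : α → List β)
    (g : β → M) :
    ((l.flatMap f).map g).prod = (l.map fun a => ((f a).map g).prod).prod := by
  induction l with
  | nil => rfl
  | cons a l ih => simp [ih]

section Descent

variable {n : ℕ}

def bWord (hn : 3 ≤ n) (i : Fin n) : List (Fin n) :=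
  if i.val = 0 then [Fin.castLE hn 0, Fin.castLE hn 1, Fin.castLE hn 0] else [i]

lemma prod_map_sgen_bWord (hn : 3 ≤ n) (i : Fin n) :
    ((bWord hn i).map fun j => sgen j.val).prod = tgen i.val := by
  unfold bWord tgen
  split_ifs with h
  · simp [mul_assoc]
  · simp

lemma invCount_rootsB_mul_tgen_zero (hn : 2 ≤ n) {w : Perm ℤ} (hw : w ∈ signedPermGroup n)
    (h1 : w 1 < 0) (h2 : w 2 < 0) :
    invCount (rootsB n) (w * tgen 0) + 3 = invCount (rootsB n) w := by
  have hs₀ := isSimpleReflection_sgen (n := n) (k := 0) (by omega)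
  have hs₁ := isSimpleReflection_sgen (n := n) (k := 1) (by omega)
  have hw₀ := mul_mem hw (sgen_mem_signedPermGroup (k := 0) (by omega))
  have hw₁ := mul_mem hw₀ (sgen_mem_signedPermGroup (k := 1) (by omega))
  -- `t₀ = s₀ s₁ s₀` and each of the three letters is a descent
  have e₀ := hs₀.invCount_mul_add_one rootsB_pos hw.1 (by
    simp only [simpleRootB, if_pos]; rw [hw.1 1]; omega)
  have e₁ := hs₁.invCount_mul_add_one rootsB_pos hw₀.1 (by
    simp [simpleRootB, Perm.mul_apply, sgen_zero_apply, hw.1 1]; omega)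
  have e₂ := hs₀.invCount_mul_add_one rootsB_pos hw₁.1 (by
    simp [simpleRootB, Perm.mul_apply, sgen_zero_apply, sgen_apply one_ne_zero, hw.1 2]; omega)
  rw [tgen, if_pos rfl, ← mul_assoc, ← mul_assoc]
  omega

lemma exists_descent (hn : 3 ≤ n) {x : Perm ℤ}
    (hx : x ∈ Subgroup.closure (tgen '' {i | i < n})) (hx1 : x ≠ 1) : ∃ i : Fin n,
      invCount (rootsD n) (x * tgen i) + 1 = invCount (rootsD n) x ∧
      invCount (rootsB n) (x * tgen i) + (bWord hn i).length = invCount (rootsB n) x := by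
  have hxW := closure_tgen_le_signedPermGroup (by omega) hx
  by_cases hdesc : ∃ a : ℤ, 1 ≤ a ∧ a + 1 ≤ n ∧ x (a + 1) < x a
  · obtain ⟨a, ha, han, hlt⟩ := hdesc
    obtain ⟨k, rfl⟩ : ∃ k : ℕ, (k : ℤ) = a := ⟨a.toNat, by omega⟩
    have hk0 : k ≠ 0 := by omega
    have hkn : k < n := by omega
    refine ⟨⟨k, hkn⟩, ?_, ?_⟩
    · exact (isSimpleReflection_tgen (by omega) hkn).invCount_mul_add_one rootsD_pos hxW.1
        (by simpa [simpleRootD, hk0] using hlt)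
    · simp only [bWord, if_neg hk0, List.length_singleton, tgen_of_ne_zero hk0]
      exact (isSimpleReflection_sgen hkn).invCount_mul_add_one rootsB_pos hxW.1
        (by simpa [simpleRootB, hk0] using hlt)
  · push Not at hdesc
    have hmono : StrictMonoOn x (Set.Icc 1 n) := by
      refine strictMonoOn_of_lt_add_one Set.ordConnected_Icc fun a _ ha ha1 => ?_
      rw [Set.mem_Icc] at ha ha1
      exact lt_of_le_of_ne (hdesc a ha.1 ha1.2) (x.injective.ne (by omega))
    obtain ⟨h1, h2⟩ := apply_one_neg_and_apply_two_neg (by omega) hxW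
      (even_negCount_of_mem_closure (by omega) hx) hx1 hmono
    refine ⟨⟨0, by omega⟩, ?_, ?_⟩
    · refine (isSimpleReflection_tgen (by omega) (by omega)).invCount_mul_add_one rootsD_pos
        hxW.1 ?_
      simp only [simpleRootD, if_pos, hxW.1 1]
      omega
    · exact invCount_rootsB_mul_tgen_zero (by omega) hxW h1 h2

lemma exists_tgen_word_length_eq_invCount (hn : 3 ≤ n) {x : Perm ℤ}
    (hx : x ∈ Subgroup.closure (tgen '' {i | i < n})) :
    ∃ l : List (Fin n), (l.map fun i => tgen i.val).prod = x ∧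
      l.length = invCount (rootsD n) x ∧
      (l.flatMap (bWord hn)).length = invCount (rootsB n) x := by
  induction h : invCount (rootsD n) x using Nat.strong_induction_on generalizing x with
  | _ m ih =>
  rcases eq_or_ne x 1 with rfl | hx1
  · exact ⟨[], rfl, by simp [← h, invCount_one rootsD_pos],
      by simp [invCount_one rootsB_pos]⟩
  obtain ⟨i, hD, hB⟩ := exists_descent hn hx hx1
  have hxi : x * tgen i ∈ Subgroup.closure (tgen '' {i | i < n}) :=
    mul_mem hx (Subgroup.subset_closure ⟨i, i.isLt, rfl⟩)
  obtain ⟨l, hprod, hlenD, hlenB⟩ := ih _ (by omega) hxi rfl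
  refine ⟨l ++ [i], ?_, ?_, ?_⟩
  · simp [hprod, mul_assoc, tgen_mul_self]
  · simp [hlenD, ← h, ← hD]
  · simp [hlenB, ← hB]

end Descent

/-- Allcock's embedding is compatible with canonical positive lifts: if `LB` is the canonical
positive lift of signed permutations to the Artin group `A_{Bₙ}` (lifting reduced words in the
generators `s 0, …, s (n-1)`), `LD` is the canonical positive lift of elements of
`W_{Dₙ} = ⟨t 0, …, t (n-1)⟩` to `A_{Dₙ}` (lifting reduced words in `t 0, …, t (n-1)`), and
`ι : A_{Dₙ} → Ã_{Bₙ}` sends `τ₀ ↦ π₁(σ₀σ₁σ₀)`, `τᵢ ↦ π₁(σᵢ)`, then `π₁ (LB x) = ι (LD x)`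
for every `x ∈ W_{Dₙ}`. -/
theorem piOne_of_B_lift_eq_D_lift (n : ℕ) (hn : 3 ≤ n)
    (LB : Equiv.Perm ℤ → ArtinGroup (mB n))
    (hLB : ∀ (w : Equiv.Perm ℤ) (l : List (Fin n)),
      (l.map (fun i => sgen i.val)).prod = w →
      l.length = wordLength (sgen '' {i | i < n}) w →
      (l.map PresentedGroup.of).prod = LB w)
    (LD : Equiv.Perm ℤ → ArtinGroup (mD n))
    (hLD : ∀ (w : Equiv.Perm ℤ) (l : List (Fin n)),
      (l.map (fun i => tgen i.val)).prod = w →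
      l.length = wordLength (tgen '' {i | i < n}) w →
      (l.map PresentedGroup.of).prod = LD w)
    (ι : ArtinGroup (mD n) →* AtilB n)
    (hι0 : ι (PresentedGroup.of (⟨0, by omega⟩ : Fin n)) =
      piOne n (PresentedGroup.of (⟨0, by omega⟩ : Fin n) *
        PresentedGroup.of (⟨1, by omega⟩ : Fin n) *
        PresentedGroup.of (⟨0, by omega⟩ : Fin n)))
    (hιi : ∀ i : Fin n, 1 ≤ i.val → ι (PresentedGroup.of i) = piOne n (PresentedGroup.of i)) :
    ∀ x : Equiv.Perm ℤ, x ∈ Subgroup.closure (tgen '' {i | i < n}) →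
      piOne n (LB x) = ι (LD x) := by
  intro x hx
  obtain ⟨l, hprodD, hlenD, hlenB⟩ := exists_tgen_word_length_eq_invCount hn hx
  have hprodB : ((l.flatMap (bWord hn)).map fun i => sgen i.val).prod = x := by
    simpa only [List.prod_map_flatMap, prod_map_sgen_bWord] using hprodD
  have hletter (i : Fin n) :
      ((bWord hn i).map fun j => piOne n (PresentedGroup.of j)).prod =
        ι (PresentedGroup.of i) := by
    unfold bWord
    split_ifs with hi
    · rw [show i = ⟨0, by omega⟩ from Fin.ext hi, hι0]
      simp only [List.map_cons, List.map_nil, List.prod_cons, List.prod_nil, mul_one, map_mul,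
        mul_assoc]
      rfl
    · simp [hιi i (Nat.one_le_iff_ne_zero.mpr hi)]
  rw [← hLB x _ hprodB (by rw [← hprodB, wordLength_sgen _ (by rw [hprodB, hlenB])]),
    ← hLD x l hprodD (by rw [← hprodD, wordLength_tgen (by omega) _ (by rw [hprodD, hlenD])]),
    map_list_prod, map_list_prod, List.map_map, List.map_map, Function.comp_def,
    List.prod_map_flatMap, Function.comp_def]
  simp only [hletter]
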